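/- arXiv:2403.18729 — 2 statements merged into one kernel-verified Lean document; each statement's English description precedes it below -/
import Mathlib

section
/- Let σ(x) = 1 / (1 + exp(-x)) be the sigmoid function. For reals l, u, x with 0 ≤ l, l ≤ x, x ≤ u, and l < u, we have σ(l) + ((σ(u) - σ(l)) / (u - l)) * (x - l) ≤ σ(x). -/
open Real Set

private lemma sig_pos (y : ℝ) : (0:ℝ) < 1 + Real.exp (-y) := by positivity

private lemma sig_hasDeriv (y : ℝ) :
    HasDerivAt (fun t => 1 / (1 + Real.exp (-t)))
      (Real.exp (-y) / (1 + Real.exp (-y))^2) y := by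
  have hg : HasDerivAt (fun t : ℝ => 1 + Real.exp (-t)) (-Real.exp (-y)) y := by
    have : HasDerivAt (fun t : ℝ => Real.exp (-t)) (Real.exp (-y) * (-1)) y :=
      (Real.hasDerivAt_exp (-y)).comp y ((hasDerivAt_id y).neg)
    simpa using this.const_add 1
  have h := (hasDerivAt_const y (1:ℝ)).fun_div hg (sig_pos y).ne'
  refine h.congr_deriv ?_
  ring

private lemma sig_deriv_hasDeriv (y : ℝ) :
    HasDerivAt (fun t => Real.exp (-t) / (1 + Real.exp (-t))^2)
      (Real.exp (-y) * (Real.exp (-y) - 1) / (1 + Real.exp (-y))^3) y := by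
  have he : HasDerivAt (fun t : ℝ => Real.exp (-t)) (-Real.exp (-y)) y := by
    have : HasDerivAt (fun t : ℝ => Real.exp (-t)) (Real.exp (-y) * (-1)) y :=
      (Real.hasDerivAt_exp (-y)).comp y ((hasDerivAt_id y).neg)
    simpa using this
  have hg : HasDerivAt (fun t : ℝ => (1 + Real.exp (-t))^2)
      (2 * (1 + Real.exp (-y)) * (-Real.exp (-y))) y := by
    have := (he.const_add 1).fun_pow 2
    simpa [mul_comm, mul_assoc, mul_left_comm] using this
  have h := he.fun_div hg (by positivity : ((1 + Real.exp (-y))^2 : ℝ) ≠ 0)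
  refine h.congr_deriv ?_
  have hd := (sig_pos y).ne'
  rw [div_eq_div_iff (by positivity) (by positivity)]
  ring

private lemma sig_concave : ConcaveOn ℝ (Set.Ici (0:ℝ))
    (fun t => 1 / (1 + Real.exp (-t))) := by
  apply concaveOn_of_hasDerivWithinAt2_nonpos (f' := fun t => Real.exp (-t) / (1 + Real.exp (-t))^2)
    (f'' := fun t => Real.exp (-t) * (Real.exp (-t) - 1) / (1 + Real.exp (-t))^3)
    (convex_Ici 0)
  · exact (continuous_const.div (by continuity) (fun t => (sig_pos t).ne')).continuousOn
  · exact fun y _ => (sig_hasDeriv y).hasDerivWithinAt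
  · exact fun y _ => (sig_deriv_hasDeriv y).hasDerivWithinAt
  · intro y hy
    rw [interior_Ici] at hy
    have h1 : Real.exp (-y) ≤ 1 := by
      rw [Real.exp_le_one_iff]; linarith [le_of_lt (Set.mem_Ioi.mp hy)]
    have h2 : (0:ℝ) < (1 + Real.exp (-y))^3 := by positivity
    apply div_nonpos_of_nonpos_of_nonneg _ h2.le
    nlinarith [Real.exp_pos (-y)]

theorem deeppoly_sigmoid_chord_lower (σ : ℝ → ℝ)
    (hσ : ∀ x, σ x = 1 / (1 + Real.exp (-x)))
    (l u x : ℝ) (hl : 0 ≤ l) (hlx : l ≤ x) (hxu : x ≤ u) (hlu : l < u) :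
    σ l + ((σ u - σ l) / (u - l)) * (x - l) ≤ σ x := by
  have hc := sig_concave
  have hul : (0:ℝ) < u - l := by linarith
  set a : ℝ := (u - x) / (u - l) with ha
  set b : ℝ := (x - l) / (u - l) with hb
  have ha0 : 0 ≤ a := div_nonneg (by linarith) hul.le
  have hb0 : 0 ≤ b := div_nonneg (by linarith) hul.le
  have hab : a + b = 1 := by rw [ha, hb]; field_simp; ring
  have hx : a * l + b * u = x := by rw [ha, hb]; field_simp; ring
  have := hc.2 (show l ∈ Set.Ici (0:ℝ) from hl) (show u ∈ Set.Ici (0:ℝ) from le_trans hl hlu.le) ha0 hb0 hab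
  rw [smul_eq_mul, smul_eq_mul, smul_eq_mul, smul_eq_mul, hx] at this
  rw [hσ l, hσ u, hσ x]
  have key : (1 / (1 + Real.exp (-l))) + ((1 / (1 + Real.exp (-u)) - 1 / (1 + Real.exp (-l))) / (u - l)) * (x - l)
      = a * (1 / (1 + Real.exp (-l))) + b * (1 / (1 + Real.exp (-u))) := by
    rw [ha, hb]
    field_simp
    ring
  linarith [this]
end

section
/- Let σ(x) = 1 / (1 + exp(-x)). For reals l, u, x with l ≤ x ≤ u and l < u, let λ' = min(σ(l) * (1 - σ(l)), σ(u) * (1 - σ(u))). Then σ(l) + λ' * (x - l) ≤ σ(x). -/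
private lemma qmin_le {a s b : ℝ} (has : a ≤ s) (hsb : s ≤ b) :
    min (a * (1 - a)) (b * (1 - b)) ≤ s * (1 - s) := by
  rcases le_total (a + s) 1 with h | h
  · exact le_trans (min_le_left _ _) (by nlinarith)
  · exact le_trans (min_le_right _ _) (by nlinarith)

theorem deeppoly_sigmoid_tangent_lower (σ : ℝ → ℝ)
    (hσ : ∀ x, σ x = 1 / (1 + Real.exp (-x)))
    (l u x : ℝ) (hlx : l ≤ x) (hxu : x ≤ u) (hlu : l < u) :
    σ l + min (σ l * (1 - σ l)) (σ u * (1 - σ u)) * (x - l) ≤ σ x := by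
  set f : ℝ → ℝ := fun t => 1 / (1 + Real.exp (-t)) with hf
  have hpos : ∀ t : ℝ, 0 < 1 + Real.exp (-t) := fun t => by positivity
  have hderiv : ∀ t : ℝ, HasDerivAt f (f t * (1 - f t)) t := by
    intro t
    have h1 : HasDerivAt (fun s : ℝ => 1 + Real.exp (-s)) (-Real.exp (-t)) t := by
      have := ((Real.hasDerivAt_exp (-t)).comp t ((hasDerivAt_id t).neg)).const_add 1
      simpa using this
    have h2 := h1.inv (ne_of_gt (hpos t))
    have h3 : f t * (1 - f t) = -(-Real.exp (-t)) / (1 + Real.exp (-t)) ^ 2 := by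
      have := (hpos t).ne'
      simp only [hf]
      field_simp
      ring
    rw [h3]
    simpa [hf, one_div, Pi.inv_def] using h2
  have hmono : ∀ a b : ℝ, a ≤ b → f a ≤ f b := by
    intro a b hab
    have h1 : 1 + Real.exp (-b) ≤ 1 + Real.exp (-a) := by
      have := Real.exp_le_exp.2 (neg_le_neg hab)
      linarith
    exact one_div_le_one_div_of_le (hpos b) h1
  set m := min (σ l * (1 - σ l)) (σ u * (1 - σ u)) with hm
  have hm' : m = min (f l * (1 - f l)) (f u * (1 - f u)) := by rw [hm, hσ l, hσ u]
  have hbound : ∀ t, l ≤ t → t ≤ u → m ≤ f t * (1 - f t) := by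
    intro t h1 h2
    rw [hm']
    exact qmin_le (hmono l t h1) (hmono t u h2)
  set g : ℝ → ℝ := fun t => f t - m * t with hg
  have hgderiv : ∀ t : ℝ, HasDerivAt g (f t * (1 - f t) - m) t :=
    fun t => (hderiv t).sub (by simpa using (hasDerivAt_id t).const_mul m)
  have hgmono : MonotoneOn g (Set.Icc l u) := by
    apply monotoneOn_of_deriv_nonneg (convex_Icc l u)
    · exact fun t _ => ((hgderiv t).continuousAt).continuousWithinAt
    · exact fun t _ => ((hgderiv t).differentiableAt).differentiableWithinAt
    · intro t ht
      rw [interior_Icc] at ht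
      rw [(hgderiv t).deriv]
      have := hbound t ht.1.le ht.2.le
      linarith
  have key := hgmono ⟨le_refl l, hlu.le⟩ ⟨hlx, hxu⟩ hlx
  simp only [hg] at key
  rw [hσ l, hσ x]
  show f l + m * (x - l) ≤ f x
  nlinarith [key]
end
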